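/- arXiv:1703.05109 — 4 statements merged into one kernel-verified Lean document; each statement's English description precedes it below -/
import Mathlib

section
/- Let δ > 0, let h : ℝ → ℝ be continuous at 0 and differentiable on (−δ,0) ∪ (0,δ), and suppose the one-sided limits h′(0⁺) = lim_{x↓0} h′(x) and h′(0⁻) = lim_{x↑0} h′(x) exist. Let f : ℝ × ℝ → ℝ be continuous on ℝ × (−δ,δ) with continuous partial derivative ∂f/∂x there, with v ↦ f(v,x) and v ↦ (∂f/∂x)(v,x) integrable on (−∞, h(x)) for each x, |∂f/∂x| dominated by an integrable function of v, and suppose the map x ↦ ∫_{−∞}^{h(x)} (∂f/∂x)(v,x) dv is continuous at 0 (which follows from the domination and continuity assumptions). Let μ₂(x) = ∫_{−∞}^{h(x)} f(v,x) dv. Then both one-sided limits of μ₂′ at 0 exist and lim_{x↓0} μ₂′(x) − lim_{x↑0} μ₂′(x) = (h′(0⁺) − h′(0⁻)) · f(h(0), 0). -/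
open MeasureTheory Set Filter Topology

lemma rkd_key_deriv
    (δ : ℝ) (h h' : ℝ → ℝ)
    (f f' : ℝ → ℝ → ℝ)
    (hf_cont : ContinuousOn (fun p : ℝ × ℝ => f p.1 p.2) ((univ : Set ℝ) ×ˢ Ioo (-δ) δ))
    (hf_deriv : ∀ v : ℝ, ∀ x ∈ Ioo (-δ) δ, HasDerivAt (fun t => f v t) (f' v x) x)
    (hf'_cont : ContinuousOn (fun p : ℝ × ℝ => f' p.1 p.2) ((univ : Set ℝ) ×ˢ Ioo (-δ) δ))
    (hint : ∀ x ∈ Ioo (-δ) δ, IntegrableOn (fun v => f v x) (Iio (h x)))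
    (G : ℝ → ℝ) (hG : Integrable G)
    (hdom : ∀ (v : ℝ), ∀ x ∈ Ioo (-δ) δ, |f' v x| ≤ G v)
    (x : ℝ) (hx : x ∈ Ioo (-δ) δ) (hdx : HasDerivAt h (h' x) x) :
    HasDerivAt (fun t => ∫ v in Iio (h t), f v t)
      (h' x * f (h x) x + ∫ v in Iio (h x), f' v x) x := by
  obtain ⟨hx1, hx2⟩ := hx
  have hPopen : IsOpen ((univ : Set ℝ) ×ˢ Ioo (-δ) δ) := isOpen_univ.prod isOpen_Ioo
  have contf : ∀ t ∈ Ioo (-δ) δ, Continuous fun v => f v t := by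
    intro t ht
    rw [continuous_iff_continuousAt]
    intro v
    have h1 : ContinuousAt (fun p : ℝ × ℝ => f p.1 p.2) (v, t) :=
      hf_cont.continuousAt (hPopen.mem_nhds (by simp [ht]))
    have h2 : Tendsto (fun v : ℝ => (v, t)) (𝓝 v) (𝓝 (v, t)) :=
      (continuous_id.prodMk continuous_const).continuousAt
    have h3 : Tendsto (fun p : ℝ × ℝ => f p.1 p.2) (𝓝 (v, t)) (𝓝 (f v t)) := h1
    exact h3.comp h2
  have contf' : ∀ t ∈ Ioo (-δ) δ, Continuous fun v => f' v t := by
    intro t ht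
    rw [continuous_iff_continuousAt]
    intro v
    have h1 : ContinuousAt (fun p : ℝ × ℝ => f' p.1 p.2) (v, t) :=
      hf'_cont.continuousAt (hPopen.mem_nhds (by simp [ht]))
    have h2 : Tendsto (fun v : ℝ => (v, t)) (𝓝 v) (𝓝 (v, t)) :=
      (continuous_id.prodMk continuous_const).continuousAt
    have h3 : Tendsto (fun p : ℝ × ℝ => f' p.1 p.2) (𝓝 (v, t)) (𝓝 (f' v t)) := h1
    exact h3.comp h2
  have hUnhd : Ioo (-δ) δ ∈ 𝓝 x := isOpen_Ioo.mem_nhds ⟨hx1, hx2⟩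
  -- Splitting of the integral
  have hintIic : ∀ t ∈ Ioo (-δ) δ, IntegrableOn (fun v => f v t) (Iic (h t)) :=
    fun t ht => (hint t ht).congr_set_ae Iio_ae_eq_Iic.symm
  have hintIicx : ∀ t ∈ Ioo (-δ) δ, IntegrableOn (fun v => f v t) (Iic (h x)) := by
    intro t ht
    apply ((hintIic t ht).union
      ((contf t ht).integrableOn_Icc (a := min (h t) (h x)) (b := max (h t) (h x)))).mono_set
    intro v hv
    rcases le_or_gt v (h t) with hv' | hv'
    · exact Or.inl hv'
    · exact Or.inr ⟨le_of_lt (lt_of_le_of_lt (min_le_left _ _) hv'),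
        le_trans hv (le_max_right _ _)⟩
  have hsplit : ∀ t ∈ Ioo (-δ) δ, (∫ v in Iio (h t), f v t)
      = (∫ v in Iio (h x), f v t) + ∫ v in (h x)..(h t), f v t := by
    intro t ht
    have h0 := intervalIntegral.integral_Iic_sub_Iic (hintIicx t ht) (hintIic t ht)
    have e1 : (∫ v in Iio (h t), f v t) = ∫ v in Iic (h t), f v t :=
      setIntegral_congr_set Iio_ae_eq_Iic
    have e2 : (∫ v in Iio (h x), f v t) = ∫ v in Iic (h x), f v t :=
      setIntegral_congr_set Iio_ae_eq_Iic
    rw [e1, e2]; linarith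
  -- derivative of the fixed-domain integral, by dominated convergence
  obtain ⟨ε, hε, hball⟩ : ∃ ε > 0, Metric.ball x ε ⊆ Ioo (-δ) δ :=
    Metric.mem_nhds_iff.mp hUnhd
  have hA : HasDerivAt (fun t => ∫ v in Iio (h x), f v t)
      (∫ v in Iio (h x), f' v x) x := by
    refine (hasDerivAt_integral_of_dominated_loc_of_deriv_le
      (μ := volume.restrict (Iio (h x))) (F := fun t v => f v t) (F' := fun t v => f' v t)
      (bound := G) (Metric.ball_mem_nhds x hε) ?_ (hint x ⟨hx1, hx2⟩) ?_ ?_ hG.restrict ?_).2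
    · filter_upwards [hUnhd] with t ht
      exact (contf t ht).aestronglyMeasurable
    · exact (contf' x ⟨hx1, hx2⟩).aestronglyMeasurable
    · refine Eventually.of_forall fun v => fun t ht => ?_
      rw [Real.norm_eq_abs]
      exact hdom v t (hball ht)
    · refine Eventually.of_forall fun v => fun t ht => ?_
      exact hf_deriv v t (hball ht)
  -- derivative of the moving-boundary, frozen-parameter integral, by FTC + chain rule
  have hΦ : HasDerivAt (fun y => ∫ v in (h x)..y, f v x) (f (h x) x) (h x) :=
    intervalIntegral.integral_hasDerivAt_right
      ((contf x ⟨hx1, hx2⟩).intervalIntegrable _ _)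
      ((contf x ⟨hx1, hx2⟩).stronglyMeasurableAtFilter _ _)
      (contf x ⟨hx1, hx2⟩).continuousAt
  have hC : HasDerivAt (fun t => ∫ v in (h x)..(h t), f v x) (f (h x) x * h' x) x :=
    hΦ.comp x hdx
  -- the remainder term is o(t - x)
  obtain ⟨r, hr, hIcc⟩ : ∃ r > 0, Icc (x - r) (x + r) ⊆ Ioo (-δ) δ := by
    refine ⟨ε / 2, by linarith, fun y hy => hball ?_⟩
    rw [Metric.mem_ball, Real.dist_eq]
    rw [mem_Icc] at hy
    rw [abs_lt]; constructor <;> linarith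
  have hKcompact : IsCompact ((Icc (h x - 1) (h x + 1)) ×ˢ (Icc (x - r) (x + r))) :=
    (isCompact_Icc).prod isCompact_Icc
  obtain ⟨M, hM⟩ := hKcompact.exists_bound_of_continuousOn
    (hf'_cont.mono (fun p hp => ⟨trivial, hIcc hp.2⟩))
  set M' := max M 0 with hM'def
  have hM'0 : 0 ≤ M' := le_max_right _ _
  -- MVT bound
  have hMVT : ∀ v ∈ Icc (h x - 1) (h x + 1), ∀ t ∈ Icc (x - r) (x + r),
      ‖f v t - f v x‖ ≤ M' * ‖t - x‖ := by
    intro v hv t ht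
    refine (convex_Icc _ _).norm_image_sub_le_of_norm_hasDerivWithin_le
      (f' := fun s => f' v s) (fun s hs => (hf_deriv v s (hIcc hs)).hasDerivWithinAt)
      (fun s hs => ?_) (by constructor <;> [linarith [hr]; linarith [hr]]) ht
    exact le_trans (hM (v, s) ⟨hv, hs⟩) (le_max_left _ _)
  have hcx : ContinuousAt h x := hdx.continuousAt
  have hR : HasDerivAt (fun t => ∫ v in (h x)..(h t), (f v t - f v x)) 0 x := by
    rw [hasDerivAt_iff_isLittleO]
    rw [Asymptotics.isLittleO_iff]
    intro c hc
    have hpos : 0 < min 1 (c / (M' + 1)) :=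
      lt_min one_pos (div_pos hc (by linarith))
    have ev1 : ∀ᶠ t in 𝓝 x, |h t - h x| < min 1 (c / (M' + 1)) := by
      have := hcx (Metric.ball_mem_nhds (h x) hpos)
      filter_upwards [this] with t ht
      rw [Set.mem_preimage, Metric.mem_ball, Real.dist_eq] at ht
      exact ht
    have ev2 : ∀ᶠ t in 𝓝 x, t ∈ Icc (x - r) (x + r) := by
      filter_upwards [Metric.ball_mem_nhds x hr] with t ht
      rw [Metric.mem_ball, Real.dist_eq] at ht
      rw [abs_lt] at ht
      constructor <;> linarith [ht.1, ht.2]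
    filter_upwards [ev1, ev2, hUnhd] with t ht1 ht2 ht3
    have hd1 : |h t - h x| ≤ 1 := le_of_lt (lt_of_lt_of_le ht1 (min_le_left _ _))
    have hd2 : |h t - h x| ≤ c / (M' + 1) :=
      le_of_lt (lt_of_lt_of_le ht1 (min_le_right _ _))
    have hbound : ∀ v ∈ Set.uIoc (h x) (h t), ‖f v t - f v x‖ ≤ M' * ‖t - x‖ := by
      intro v hv
      apply hMVT v _ t ht2
      have h1 := hv.1
      have h2 := hv.2
      rw [abs_le] at hd1
      rcases le_total (h x) (h t) with hc' | hc'
      · rw [min_eq_left hc', max_eq_right hc'] at *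
        constructor <;> [linarith [h1]; linarith [h2, hd1.2]]
      · rw [min_eq_right hc', max_eq_left hc'] at *
        constructor <;> [linarith [h1, hd1.1]; linarith [h2]]
    have hnorm := intervalIntegral.norm_integral_le_of_norm_le_const hbound
    simp only [sub_zero, smul_zero, sub_zero]
    have hRx : (∫ v in (h x)..(h x), (f v x - f v x)) = 0 := intervalIntegral.integral_same
    rw [hRx, sub_zero]
    refine le_trans hnorm ?_
    have habs0 : (0:ℝ) ≤ |h t - h x| := abs_nonneg _
    have hnt0 : (0:ℝ) ≤ ‖t - x‖ := norm_nonneg _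
    have hdc : |h t - h x| * (M' + 1) ≤ c := by
      rw [← le_div_iff₀ (by linarith : (0:ℝ) < M' + 1)] ; exact hd2
    have : M' * ‖t - x‖ * |h t - h x| ≤ c * ‖t - x‖ := by
      nlinarith
    calc M' * ‖t - x‖ * |h t - h x| ≤ c * ‖t - x‖ := this
      _ = c * ‖t - x‖ := rfl
  -- combine
  have hBsum : ∀ t ∈ Ioo (-δ) δ, (∫ v in (h x)..(h t), f v t)
      = (∫ v in (h x)..(h t), f v x) + ∫ v in (h x)..(h t), (f v t - f v x) := by
    intro t ht
    rw [← intervalIntegral.integral_add (f := fun v => f v x) (g := fun v => f v t - f v x) ((contf x ⟨hx1, hx2⟩).intervalIntegrable _ _)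
      (((contf t ht).sub (contf x ⟨hx1, hx2⟩)).intervalIntegrable _ _)]
    congr 1
    ext v
    ring
  have hsum : HasDerivAt (fun t => (∫ v in Iio (h x), f v t)
      + ((∫ v in (h x)..(h t), f v x) + ∫ v in (h x)..(h t), (f v t - f v x)))
      ((∫ v in Iio (h x), f' v x) + (f (h x) x * h' x + 0)) x := hA.add (hC.add hR)
  have hfinal : HasDerivAt (fun t => ∫ v in Iio (h t), f v t)
      ((∫ v in Iio (h x), f' v x) + (f (h x) x * h' x + 0)) x := by
    apply hsum.congr_of_eventuallyEq
    filter_upwards [hUnhd] with t ht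
    rw [hsplit t ht, hBsum t ht]
  convert hfinal using 1
  ring

/-- Kink difference of the denominator `μ₂(x) = ∫_{-∞}^{h(x)} f(v,x) dv` in the RKD:
both one-sided limits of `μ₂'` at `0` exist and
`lim_{x↓0} μ₂'(x) − lim_{x↑0} μ₂'(x) = (h'(0⁺) − h'(0⁻)) · f(h(0),0)`. -/
theorem statement2
    (δ : ℝ) (hδ : 0 < δ)
    (h h' : ℝ → ℝ)
    (hcont : ContinuousAt h 0)
    (hh : ∀ x ∈ Ioo (-δ) δ \ {0}, HasDerivAt h (h' x) x)
    (hp hm : ℝ)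
    (hhp : Tendsto h' (𝓝[>] (0:ℝ)) (𝓝 hp))
    (hhm : Tendsto h' (𝓝[<] (0:ℝ)) (𝓝 hm))
    (f f' : ℝ → ℝ → ℝ)
    (hf_cont : ContinuousOn (fun p : ℝ × ℝ => f p.1 p.2) ((univ : Set ℝ) ×ˢ Ioo (-δ) δ))
    (hf_deriv : ∀ v : ℝ, ∀ x ∈ Ioo (-δ) δ, HasDerivAt (fun t => f v t) (f' v x) x)
    (hf'_cont : ContinuousOn (fun p : ℝ × ℝ => f' p.1 p.2) ((univ : Set ℝ) ×ˢ Ioo (-δ) δ))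
    (hint : ∀ x ∈ Ioo (-δ) δ, IntegrableOn (fun v => f v x) (Iio (h x)))
    (hint' : ∀ x ∈ Ioo (-δ) δ, IntegrableOn (fun v => f' v x) (Iio (h x)))
    (G : ℝ → ℝ) (hG : Integrable G)
    (hdom : ∀ (v : ℝ), ∀ x ∈ Ioo (-δ) δ, |f' v x| ≤ G v)
    (hIcont : ContinuousAt (fun x => ∫ v in Iio (h x), f' v x) 0) :
    ∃ Lp Lm : ℝ,
      Tendsto (fun x => deriv (fun t => ∫ v in Iio (h t), f v t) x) (𝓝[>] (0:ℝ)) (𝓝 Lp) ∧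
      Tendsto (fun x => deriv (fun t => ∫ v in Iio (h t), f v t) x) (𝓝[<] (0:ℝ)) (𝓝 Lm) ∧
      Lp - Lm = (hp - hm) * f (h 0) 0 := by
  have h0mem : (0:ℝ) ∈ Ioo (-δ) δ := ⟨by linarith, hδ⟩
  have hU : Ioo (-δ) δ ∈ 𝓝 (0:ℝ) := isOpen_Ioo.mem_nhds h0mem
  have hderiv : ∀ x ∈ Ioo (-δ) δ \ {0},
      deriv (fun t => ∫ v in Iio (h t), f v t) x
        = h' x * f (h x) x + ∫ v in Iio (h x), f' v x := by
    intro x hx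
    exact (rkd_key_deriv δ h h' f f' hf_cont hf_deriv hf'_cont hint G hG hdom
      x hx.1 (hh x hx)).deriv
  have hPopen : IsOpen ((univ : Set ℝ) ×ˢ Ioo (-δ) δ) := isOpen_univ.prod isOpen_Ioo
  have hf0 : Tendsto (fun x => f (h x) x) (𝓝 (0:ℝ)) (𝓝 (f (h 0) 0)) := by
    have h1 : ContinuousAt (fun p : ℝ × ℝ => f p.1 p.2) (h 0, 0) :=
      hf_cont.continuousAt (hPopen.mem_nhds (by simp [h0mem]))
    have h2 : Tendsto (fun x : ℝ => (h x, x)) (𝓝 0) (𝓝 (h 0, 0)) :=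
      hcont.prodMk continuousAt_id
    have h3 : Tendsto (fun p : ℝ × ℝ => f p.1 p.2) (𝓝 (h 0, 0)) (𝓝 (f (h 0) 0)) := h1
    exact h3.comp h2
  set I0 : ℝ := ∫ v in Iio (h 0), f' v 0 with hI0
  refine ⟨hp * f (h 0) 0 + I0, hm * f (h 0) 0 + I0, ?_, ?_, by ring⟩
  · have hlim : Tendsto (fun x => h' x * f (h x) x + ∫ v in Iio (h x), f' v x)
        (𝓝[>] (0:ℝ)) (𝓝 (hp * f (h 0) 0 + I0)) :=
      (hhp.mul (hf0.mono_left nhdsWithin_le_nhds)).add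
        (hIcont.tendsto.mono_left nhdsWithin_le_nhds)
    apply hlim.congr'
    filter_upwards [nhdsWithin_le_nhds hU, self_mem_nhdsWithin] with x hx1 hx2
    exact (hderiv x ⟨hx1, fun hmem => (ne_of_gt hx2) hmem⟩).symm
  · have hlim : Tendsto (fun x => h' x * f (h x) x + ∫ v in Iio (h x), f' v x)
        (𝓝[<] (0:ℝ)) (𝓝 (hm * f (h 0) 0 + I0)) :=
      (hhm.mul (hf0.mono_left nhdsWithin_le_nhds)).add
        (hIcont.tendsto.mono_left nhdsWithin_le_nhds)
    apply hlim.congr'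
    filter_upwards [nhdsWithin_le_nhds hU, self_mem_nhdsWithin] with x hx1 hx2
    exact (hderiv x ⟨hx1, fun hmem => (ne_of_lt hx2) hmem⟩).symm
end

section
/- Let δ > 0, let h : ℝ → ℝ be continuous at 0 and differentiable on (−δ,0) ∪ (0,δ), with the one-sided limits h′(0⁺) = lim_{x↓0} h′(x) and h′(0⁻) = lim_{x↑0} h′(x) existing. Let f : ℝ × ℝ → ℝ and F : ℝ × ℝ × ℝ → ℝ be such that for each fixed y, (v,x) ↦ f(v,x)·F(y,v,x) is continuous on ℝ × (−δ,δ) with a continuous partial derivative in x that is dominated by an integrable function of v, with v ↦ f(v,x)·F(y,v,x) integrable on (−∞, h(x)) for each x, and suppose the map x ↦ ∫_{−∞}^{h(x)} ∂/∂x [f(v,x)·F(y,v,x)] dv is continuous at 0. Let μ₁(x,y) = ∫_{−∞}^{h(x)} f(v,x)·F(y,v,x) dv. Then for every y ∈ ℝ both one-sided limits of x ↦ ∂μ₁/∂x(x,y) at 0 exist and lim_{x↓0} ∂μ₁/∂x(x,y) − lim_{x↑0} ∂μ₁/∂x(x,y) = (h′(0⁺) − h′(0⁻)) · f(h(0),0)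 · F(y, h(0), 0). -/
open MeasureTheory Set Filter Topology

private lemma slice_cont' {U : Set ℝ} (hU : IsOpen U) {g : ℝ × ℝ → ℝ}
    (hg : ContinuousOn g ((univ : Set ℝ) ×ˢ U)) {x : ℝ} (hx : x ∈ U) :
    Continuous (fun v => g (v, x)) := by
  rw [continuous_iff_continuousAt]
  intro v
  have h1 : ContinuousAt g (v, x) :=
    hg.continuousAt ((isOpen_univ.prod hU).mem_nhds ⟨trivial, hx⟩)
  have h2 : ContinuousAt (fun v : ℝ => (v, x)) v :=
    (continuous_id.prodMk continuous_const).continuousAt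
  exact Filter.Tendsto.comp h1 h2

private lemma abs_sub_le_of_mem_uIoc' {a b v : ℝ} (hv : v ∈ Set.uIoc a b) : |v - a| ≤ |b - a| := by
  rcases le_total a b with hab | hab
  · rw [uIoc_of_le hab] at hv
    rw [abs_of_nonneg (by linarith [hv.1]), abs_of_nonneg (by linarith)]
    linarith [hv.2]
  · rw [uIoc_of_ge hab] at hv
    rw [abs_of_nonpos (by linarith [hv.2]), abs_of_nonpos (by linarith)]
    linarith [hv.1]

/-- Kink difference of the numerator `μ₁(x,y) = ∫_{-∞}^{h(x)} f(v,x)·F(y,v,x) dv` in the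
RKD: for every `y` both one-sided limits of `x ↦ ∂μ₁/∂x(x,y)` at `0` exist and
`lim_{x↓0} ∂μ₁/∂x(x,y) − lim_{x↑0} ∂μ₁/∂x(x,y) = (h'(0⁺) − h'(0⁻)) · f(h(0),0) · F(y,h(0),0)`.
Here `P'` denotes the partial derivative `∂/∂x [f(v,x)·F(y,v,x)]`. -/
theorem statement3
    (δ : ℝ) (hδ : 0 < δ)
    (h h' : ℝ → ℝ)
    (hcont : ContinuousAt h 0)
    (hh : ∀ x ∈ Ioo (-δ) δ \ {0}, HasDerivAt h (h' x) x)
    (hp hm : ℝ)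
    (hhp : Tendsto h' (𝓝[>] (0:ℝ)) (𝓝 hp))
    (hhm : Tendsto h' (𝓝[<] (0:ℝ)) (𝓝 hm))
    (f : ℝ → ℝ → ℝ) (F : ℝ → ℝ → ℝ → ℝ) (P' : ℝ → ℝ → ℝ → ℝ)
    (hP_cont : ∀ y : ℝ, ContinuousOn (fun p : ℝ × ℝ => f p.1 p.2 * F y p.1 p.2)
      ((univ : Set ℝ) ×ˢ Ioo (-δ) δ))
    (hP_deriv : ∀ (y v : ℝ), ∀ x ∈ Ioo (-δ) δ,
      HasDerivAt (fun t => f v t * F y v t) (P' y v x) x)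
    (hP'_cont : ∀ y : ℝ, ContinuousOn (fun p : ℝ × ℝ => P' y p.1 p.2)
      ((univ : Set ℝ) ×ˢ Ioo (-δ) δ))
    (hdom : ∀ y : ℝ, ∃ G : ℝ → ℝ, Integrable G ∧
      ∀ (v : ℝ), ∀ x ∈ Ioo (-δ) δ, |P' y v x| ≤ G v)
    (hint : ∀ (y : ℝ), ∀ x ∈ Ioo (-δ) δ,
      IntegrableOn (fun v => f v x * F y v x) (Iio (h x)))
    (hIcont : ∀ y : ℝ, ContinuousAt (fun x => ∫ v in Iio (h x), P' y v x) 0) :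
    ∀ y : ℝ, ∃ Lp Lm : ℝ,
      Tendsto (fun x => deriv (fun t => ∫ v in Iio (h t), f v t * F y v t) x)
        (𝓝[>] (0:ℝ)) (𝓝 Lp) ∧
      Tendsto (fun x => deriv (fun t => ∫ v in Iio (h t), f v t * F y v t) x)
        (𝓝[<] (0:ℝ)) (𝓝 Lm) ∧
      Lp - Lm = (hp - hm) * f (h 0) 0 * F y (h 0) 0 := by
  intro y
  obtain ⟨G, hGint, hGbd⟩ := hdom y
  have hopen : IsOpen ((univ : Set ℝ) ×ˢ Ioo (-δ) δ) := isOpen_univ.prod isOpen_Ioo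
  have hmem0 : (0:ℝ) ∈ Ioo (-δ) δ := ⟨by linarith, hδ⟩
  have hg_slice : ∀ x ∈ Ioo (-δ) δ, Continuous (fun v : ℝ => f v x * F y v x) :=
    fun x hx => slice_cont' isOpen_Ioo (hP_cont y) hx
  have hP'_slice : ∀ x ∈ Ioo (-δ) δ, Continuous (fun v : ℝ => P' y v x) :=
    fun x hx => slice_cont' isOpen_Ioo (hP'_cont y) hx
  set μf : ℝ → ℝ := fun t => ∫ v in Iio (h t), f v t * F y v t with hμf
  set I : ℝ → ℝ := fun x => ∫ v in Iio (h x), P' y v x with hIdef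
  set c : ℝ → ℝ := fun x => f (h x) x * F y (h x) x with hcdef
  have key : ∀ x₀ ∈ Ioo (-δ) δ \ {0}, HasDerivAt μf (I x₀ + h' x₀ * c x₀) x₀ := by
    rintro x₀ ⟨hx₀, hx₀0⟩
    obtain ⟨ε, εpos, hball⟩ := Metric.isOpen_iff.mp isOpen_Ioo x₀ hx₀
    have hA : HasDerivAt (fun x => ∫ v in Iio (h x₀), f v x * F y v x)
        (∫ v in Iio (h x₀), P' y v x₀) x₀ := by
      have hm1 : ∀ᶠ x in 𝓝 x₀,
          AEStronglyMeasurable (fun v : ℝ => f v x * F y v x)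
            (volume.restrict (Iio (h x₀))) := by
        filter_upwards [Metric.ball_mem_nhds x₀ εpos] with x hx
        exact (hg_slice x (hball hx)).aestronglyMeasurable
      have hbd : ∀ᵐ v ∂(volume.restrict (Iio (h x₀))), ∀ x ∈ Metric.ball x₀ ε,
          ‖P' y v x‖ ≤ G v :=
        Eventually.of_forall fun v x hx => by
          rw [Real.norm_eq_abs]; exact hGbd v x (hball hx)
      have hdf : ∀ᵐ v ∂(volume.restrict (Iio (h x₀))), ∀ x ∈ Metric.ball x₀ ε,
          HasDerivAt (fun t => f v t * F y v t) (P' y v x) x :=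
        Eventually.of_forall fun v x hx => hP_deriv y v x (hball hx)
      exact (hasDerivAt_integral_of_dominated_loc_of_deriv_le (Metric.ball_mem_nhds x₀ εpos) hm1
        (hint y x₀ hx₀) (hP'_slice x₀ hx₀).aestronglyMeasurable hbd
        hGint.restrict hdf).2
    have hhx₀ : HasDerivAt h (h' x₀) x₀ := hh x₀ ⟨hx₀, hx₀0⟩
    set Cf : ℝ → ℝ := fun x => ∫ v in (h x₀)..(h x), f v x * F y v x with hCfdef
    have hC : HasDerivAt Cf (h' x₀ * c x₀) x₀ := by
      rw [hasDerivAt_iff_isLittleO]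
      have h2 : (fun x => c x₀ * (h x - h x₀ - (x - x₀) * h' x₀)) =o[𝓝 x₀]
          fun x => x - x₀ := by
        have := hasDerivAt_iff_isLittleO.mp hhx₀
        simpa [smul_eq_mul, mul_sub, mul_comm, mul_left_comm, mul_assoc] using
          this.const_mul_left (c x₀)
      have h1 : (fun x => Cf x - (h x - h x₀) * c x₀) =o[𝓝 x₀] fun x => x - x₀ := by
        obtain ⟨K, Kpos, hK⟩ := hhx₀.hasFDerivAt.isBigO_sub.exists_pos
        rw [Asymptotics.isBigOWith_iff] at hK
        rw [Asymptotics.isLittleO_iff]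
        intro ε' hε'
        have hgc : ContinuousAt (fun p : ℝ × ℝ => f p.1 p.2 * F y p.1 p.2) (h x₀, x₀) :=
          (hP_cont y).continuousAt (hopen.mem_nhds ⟨trivial, hx₀⟩)
        rw [Metric.continuousAt_iff] at hgc
        obtain ⟨η, ηpos, hη⟩ := hgc (ε' / K) (by positivity)
        have hev1 : ∀ᶠ x in 𝓝 x₀, |h x - h x₀| < η := by
          have := Metric.tendsto_nhds.mp hhx₀.continuousAt η ηpos
          simpa [Real.dist_eq] using this
        have hev2 : ∀ᶠ x in 𝓝 x₀, |x - x₀| < η := by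
          filter_upwards [Metric.ball_mem_nhds x₀ ηpos] with x hx
          simpa [Real.dist_eq] using hx
        have hev3 : ∀ᶠ x in 𝓝 x₀, x ∈ Ioo (-δ) δ :=
          isOpen_Ioo.mem_nhds hx₀
        filter_upwards [hK, hev1, hev2, hev3] with x hKx hx1 hx2 hx3
        have hcont_v : Continuous (fun v : ℝ => f v x * F y v x) := hg_slice x hx3
        have hint1 : IntervalIntegrable (fun v : ℝ => f v x * F y v x)
            volume (h x₀) (h x) := hcont_v.intervalIntegrable _ _
        have heq : Cf x - (h x - h x₀) * c x₀
            = ∫ v in (h x₀)..(h x), (f v x * F y v x - c x₀) := by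
          rw [intervalIntegral.integral_sub hint1 intervalIntegrable_const,
            intervalIntegral.integral_const, smul_eq_mul]
        have hbd2 : ∀ v ∈ Set.uIoc (h x₀) (h x), ‖f v x * F y v x - c x₀‖ ≤ ε' / K := by
          intro v hv
          have h4 : |v - h x₀| ≤ |h x - h x₀| := abs_sub_le_of_mem_uIoc' hv
          have h5 : dist ((v, x) : ℝ × ℝ) (h x₀, x₀) < η := by
            rw [Prod.dist_eq]
            exact max_lt (by rw [Real.dist_eq]; exact lt_of_le_of_lt h4 hx1)
              (by rw [Real.dist_eq]; exact hx2)
          have h6 := hη h5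
          rw [Real.dist_eq] at h6
          exact le_of_lt h6
        rw [heq]
        calc ‖∫ v in (h x₀)..(h x), (f v x * F y v x - c x₀)‖
            ≤ (ε' / K) * |h x - h x₀| :=
              intervalIntegral.norm_integral_le_of_norm_le_const hbd2
          _ ≤ (ε' / K) * (K * ‖x - x₀‖) := by
              apply mul_le_mul_of_nonneg_left _ (by positivity)
              simpa [Real.norm_eq_abs] using hKx
          _ = ε' * ‖x - x₀‖ := by field_simp
      have hfun : (fun x => Cf x - Cf x₀ - (x - x₀) • (h' x₀ * c x₀)) =
          fun x => (Cf x - (h x - h x₀) * c x₀)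
            + c x₀ * (h x - h x₀ - (x - x₀) * h' x₀) := by
        funext x
        have : Cf x₀ = 0 := intervalIntegral.integral_same
        rw [this, smul_eq_mul]
        ring
      rw [hfun]
      exact h1.add h2
    have hμ_eq : μf =ᶠ[𝓝 x₀]
        fun x => (∫ v in Iio (h x₀), f v x * F y v x) + Cf x := by
      filter_upwards [isOpen_Ioo.mem_nhds hx₀] with x hx
      have hIio : IntegrableOn (fun v : ℝ => f v x * F y v x) (Iio (h x)) := hint y x hx
      have hIio' : IntegrableOn (fun v : ℝ => f v x * F y v x) (Iio (h x₀)) := by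
        rcases le_total (h x₀) (h x) with hle | hle
        · exact hIio.mono_set (Iio_subset_Iio hle)
        · have hIcc : IntegrableOn (fun v : ℝ => f v x * F y v x) (Icc (h x) (h x₀)) :=
            (hg_slice x hx).integrableOn_Icc
          refine (hIio.union hIcc).mono_set ?_
          intro v hv
          rcases lt_or_ge v (h x) with h1 | h1
          · exact Or.inl h1
          · exact Or.inr ⟨h1, le_of_lt hv⟩
      have e1 : (∫ v in Iio (h x), f v x * F y v x)
          = ∫ v in Iic (h x), f v x * F y v x := setIntegral_congr_set Iio_ae_eq_Iic
      have e2 : (∫ v in Iio (h x₀), f v x * F y v x)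
          = ∫ v in Iic (h x₀), f v x * F y v x := setIntegral_congr_set Iio_ae_eq_Iic
      have e3 := intervalIntegral.integral_Iic_sub_Iic
        ((integrableOn_Iic_iff_integrableOn_Iio (f := fun v : ℝ => f v x * F y v x) (b := h x₀)).mpr hIio')
        ((integrableOn_Iic_iff_integrableOn_Iio (f := fun v : ℝ => f v x * F y v x) (b := h x)).mpr hIio)
      show (∫ v in Iio (h x), f v x * F y v x)
          = (∫ v in Iio (h x₀), f v x * F y v x) + Cf x
      rw [e1, e2]
      have : Cf x = ∫ v in (h x₀)..(h x), f v x * F y v x := rfl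
      rw [this]
      linarith [e3]
    exact (hA.add hC).congr_of_eventuallyEq hμ_eq
  have hc0 : ContinuousAt c 0 := by
    have h1 : ContinuousAt (fun p : ℝ × ℝ => f p.1 p.2 * F y p.1 p.2) (h 0, 0) :=
      (hP_cont y).continuousAt (hopen.mem_nhds ⟨trivial, hmem0⟩)
    have h2 : ContinuousAt (fun x : ℝ => (h x, x)) 0 := hcont.prodMk continuousAt_id
    exact Filter.Tendsto.comp h1 h2
  have hI0 : ContinuousAt I 0 := hIcont y
  refine ⟨I 0 + hp * c 0, I 0 + hm * c 0, ?_, ?_, ?_⟩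
  · have hev : (fun x => I x + h' x * c x) =ᶠ[𝓝[>] (0:ℝ)] fun x => deriv μf x := by
      filter_upwards [mem_nhdsWithin_of_mem_nhds (Ioo_mem_nhds (neg_lt_zero.mpr hδ) hδ),
        self_mem_nhdsWithin] with x hx1 hx2
      exact ((key x ⟨hx1, by simpa using ne_of_gt hx2⟩).deriv).symm
    have ht : Tendsto (fun x => I x + h' x * c x) (𝓝[>] (0:ℝ))
        (𝓝 (I 0 + hp * c 0)) :=
      (hI0.tendsto.mono_left nhdsWithin_le_nhds).add
        (hhp.mul (hc0.tendsto.mono_left nhdsWithin_le_nhds))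
    exact ht.congr' hev
  · have hev : (fun x => I x + h' x * c x) =ᶠ[𝓝[<] (0:ℝ)] fun x => deriv μf x := by
      filter_upwards [mem_nhdsWithin_of_mem_nhds (Ioo_mem_nhds (neg_lt_zero.mpr hδ) hδ),
        self_mem_nhdsWithin] with x hx1 hx2
      exact ((key x ⟨hx1, by simpa using ne_of_lt hx2⟩).deriv).symm
    have ht : Tendsto (fun x => I x + h' x * c x) (𝓝[<] (0:ℝ))
        (𝓝 (I 0 + hm * c 0)) :=
      (hI0.tendsto.mono_left nhdsWithin_le_nhds).add
        (hhm.mul (hc0.tendsto.mono_left nhdsWithin_le_nhds))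
    exact ht.congr' hev
  · simp only [hcdef]
    ring
end

section
/- Let δ > 0, let h : ℝ → ℝ be continuous at 0 and differentiable on (−δ,0) ∪ (0,δ), with one-sided derivative limits h′(0⁺) and h′(0⁻) existing and h′(0⁺) ≠ h′(0⁻). Let f : ℝ × ℝ → ℝ be continuous on ℝ × (−δ,δ) with continuous x-partial derivative dominated by an integrable function of v, with v ↦ f(v,x) integrable on ℝ for each x, and f(h(0),0) > 0. Let F₀ : ℝ × ℝ × ℝ → ℝ be such that for each y, (v,x) ↦ f(v,x)·F₀(y,v,x) satisfies the same continuity, differentiability, domination, and integrability conditions, and suppose x ↦ ∫_{h(x)}^{∞} (∂f/∂x)(v,x) dv and x ↦ ∫_{h(x)}^{∞} ∂/∂x[f(v,x)F₀(y,v,x)] dv are continuous at 0. Define ν₂(x) = ∫_{h(x)}^{∞} f(v,x) dv and ν₁(x,y) = ∫_{h(x)}^{∞} f(v,x)·F₀(y,v,x) dv. Then for every y ∈ ℝ, [lim_{x↓0} ∂ν₁/∂x(x,y) − lim_{x↑0} ∂ν₁/∂x(x,y)] / [lim_{x↓0} ν₂′(x) − lim_{x↑0} ν₂′(x)] = F₀(y,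 h(0), 0). -/
open MeasureTheory Set Filter Topology

lemma split_int {g : ℝ → ℝ} (hg : Integrable g) (a b : ℝ) :
    ∫ v in Ioi a, g v = (∫ v in a..b, g v) + ∫ v in Ioi b, g v := by
  rcases le_total a b with hab | hab
  · rw [intervalIntegral.integral_of_le hab,
      ← setIntegral_union (Ioc_disjoint_Ioi le_rfl) measurableSet_Ioi hg.integrableOn hg.integrableOn,
      Ioc_union_Ioi_eq_Ioi hab]
  · rw [intervalIntegral.integral_symm, intervalIntegral.integral_of_le hab]
    have := setIntegral_union (Ioc_disjoint_Ioi (le_refl a)) measurableSet_Ioi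
      (hg.integrableOn (s := Ioc b a)) (hg.integrableOn (s := Ioi a))
    rw [Ioc_union_Ioi_eq_Ioi hab] at this
    rw [this]; ring

lemma key_deriv (δ : ℝ) (h : ℝ → ℝ) (g g' : ℝ → ℝ → ℝ) (G : ℝ → ℝ) (hG : Integrable G)
    (hg_cont : ContinuousOn (fun p : ℝ × ℝ => g p.1 p.2) ((univ : Set ℝ) ×ˢ Ioo (-δ) δ))
    (hg_deriv : ∀ v : ℝ, ∀ x ∈ Ioo (-δ) δ, HasDerivAt (fun t => g v t) (g' v x) x)
    (hg'_cont : ContinuousOn (fun p : ℝ × ℝ => g' p.1 p.2) ((univ : Set ℝ) ×ˢ Ioo (-δ) δ))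
    (hdom : ∀ v : ℝ, ∀ x ∈ Ioo (-δ) δ, |g' v x| ≤ G v)
    (hint : ∀ x ∈ Ioo (-δ) δ, Integrable (fun v => g v x))
    {x₀ d : ℝ} (hx₀ : x₀ ∈ Ioo (-δ) δ) (hhd : HasDerivAt h d x₀) :
    HasDerivAt (fun t => ∫ v in Ioi (h t), g v t)
      ((∫ v in Ioi (h x₀), g' v x₀) - g (h x₀) x₀ * d) x₀ := by
  have hopen : IsOpen ((univ : Set ℝ) ×ˢ Ioo (-δ) δ) := isOpen_univ.prod isOpen_Ioo
  -- continuity of slices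
  have hcont_slice : ∀ x ∈ Ioo (-δ) δ, Continuous (fun v => g v x) := by
    intro x hx
    rw [continuous_iff_continuousAt]
    intro v
    exact (hg_cont.continuousAt (hopen.mem_nhds ⟨trivial, hx⟩)).comp
      (continuousAt_id.prodMk continuousAt_const)
  have hcont_slice' : ∀ x ∈ Ioo (-δ) δ, Continuous (fun v => g' v x) := by
    intro x hx
    rw [continuous_iff_continuousAt]
    intro v
    exact (hg'_cont.continuousAt (hopen.mem_nhds ⟨trivial, hx⟩)).comp
      (continuousAt_id.prodMk continuousAt_const)
  obtain ⟨ε, hε, hball⟩ := Metric.isOpen_iff.1 isOpen_Ioo x₀ hx₀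
  -- part A : fixed boundary, moving parameter
  have hA : HasDerivAt (fun t => ∫ v in Ioi (h x₀), g v t)
      (∫ v in Ioi (h x₀), g' v x₀) x₀ := by
    have := (hasDerivAt_integral_of_dominated_loc_of_deriv_le (F := fun x v => g v x)
      (F' := fun x v => g' v x) (μ := volume.restrict (Ioi (h x₀))) (bound := G) (Metric.ball_mem_nhds x₀ hε)
      ?_ ((hint x₀ hx₀).restrict) ?_ ?_ (hG.restrict) ?_).2
    · exact this
    · filter_upwards [isOpen_Ioo.mem_nhds hx₀] with x hx
      exact ((hcont_slice x hx).aestronglyMeasurable).restrict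
    · exact ((hcont_slice' x₀ hx₀).aestronglyMeasurable).restrict
    · refine Eventually.of_forall fun v => fun x hx => ?_
      rw [Real.norm_eq_abs]
      exact hdom v x (hball hx)
    · exact Eventually.of_forall fun v => fun x hx => hg_deriv v x (hball hx)
  -- part C : moving boundary, frozen parameter
  have hC : HasDerivAt (fun t => ∫ v in (h x₀)..(h t), g v x₀) (g (h x₀) x₀ * d) x₀ := by
    have hF : HasDerivAt (fun u => ∫ v in (h x₀)..u, g v x₀) (g (h x₀) x₀) (h x₀) :=
      intervalIntegral.integral_hasDerivAt_right
        ((hint x₀ hx₀).intervalIntegrable)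
        ((hcont_slice x₀ hx₀).stronglyMeasurable.stronglyMeasurableAtFilter)
        ((hcont_slice x₀ hx₀).continuousAt)
    exact hF.comp x₀ hhd
  -- compact bound for g'
  obtain ⟨r, hr0, hrball⟩ : ∃ r > 0, Icc (x₀ - r) (x₀ + r) ⊆ Ioo (-δ) δ := by
    refine ⟨ε/2, by positivity, fun t ht => hball ?_⟩
    rw [Metric.mem_ball, Real.dist_eq, abs_lt]
    constructor <;> [linarith [ht.1]; linarith [ht.2]]
  obtain ⟨M, hM⟩ := (isCompact_Icc.prod isCompact_Icc).exists_bound_of_continuousOn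
    (hg'_cont.mono (fun p hp => ⟨trivial, hrball hp.2⟩))
    (s := Icc (h x₀ - 1) (h x₀ + 1) ×ˢ Icc (x₀ - r) (x₀ + r))
  have hM0 : 0 ≤ M := le_trans (norm_nonneg _) (hM (h x₀, x₀)
    ⟨⟨by linarith, by linarith⟩, ⟨by linarith, by linarith⟩⟩)
  have hMVT : ∀ v ∈ Icc (h x₀ - 1) (h x₀ + 1), ∀ t ∈ Icc (x₀ - r) (x₀ + r),
      |g v t - g v x₀| ≤ M * |t - x₀| := by
    intro v hv t ht
    have := (convex_Icc (x₀ - r) (x₀ + r)).norm_image_sub_le_of_norm_hasDerivWithin_le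
      (f := fun s => g v s) (f' := fun s => g' v s)
      (fun s hs => (hg_deriv v s (hrball hs)).hasDerivWithinAt)
      (fun s hs => hM (v, s) ⟨hv, hs⟩)
      (⟨by linarith, by linarith⟩ : x₀ ∈ Icc (x₀ - r) (x₀ + r)) ht
    simpa [Real.norm_eq_abs] using this
  -- h is locally Lipschitz-bounded at x₀
  obtain ⟨c, hc0, hcB⟩ := hhd.hasFDerivAt.isBigO_sub.exists_pos
  rw [Asymptotics.isBigOWith_iff] at hcB
  -- part R : the remainder has derivative 0
  have hR : HasDerivAt (fun t => ∫ v in (h x₀)..(h t), (g v t - g v x₀)) 0 x₀ := by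
    rw [hasDerivAt_iff_isLittleO]
    simp only [intervalIntegral.integral_same, smul_zero, sub_zero]
    rw [Asymptotics.isLittleO_iff]
    intro e he
    have hev1 : ∀ᶠ t in 𝓝 x₀, t ∈ Icc (x₀ - r) (x₀ + r) :=
      Icc_mem_nhds (by linarith) (by linarith)
    have hev2 : ∀ᶠ t in 𝓝 x₀, h t ∈ Icc (h x₀ - 1) (h x₀ + 1) :=
      hhd.continuousAt (Icc_mem_nhds (by linarith) (by linarith))
    have hev3 : ∀ᶠ t in 𝓝 x₀, |t - x₀| ≤ e / (M * c + 1) := by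
      have : (0:ℝ) < e / (M * c + 1) := by positivity
      have := Metric.ball_mem_nhds x₀ this
      filter_upwards [this] with t ht
      rw [Metric.mem_ball, Real.dist_eq] at ht
      exact ht.le
    filter_upwards [hev1, hev2, hcB, hev3] with t ht1 ht2 htc hte
    have hsub : Set.uIoc (h x₀) (h t) ⊆ Icc (h x₀ - 1) (h x₀ + 1) := by
      intro v hv
      have hlow : h x₀ - 1 ≤ min (h x₀) (h t) := le_min (by linarith) ht2.1
      have hhigh : max (h x₀) (h t) ≤ h x₀ + 1 := max_le (by linarith) ht2.2
      exact ⟨hlow.trans hv.1.le, hv.2.trans hhigh⟩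
    have hbnd : ∀ v ∈ Set.uIoc (h x₀) (h t), ‖g v t - g v x₀‖ ≤ M * |t - x₀| := by
      intro v hv
      simpa [Real.norm_eq_abs] using hMVT v (hsub hv) t ht1
    have h1 : ‖∫ v in (h x₀)..(h t), (g v t - g v x₀)‖ ≤ M * |t - x₀| * |h t - h x₀| :=
      intervalIntegral.norm_integral_le_of_norm_le_const hbnd
    have h2 : |h t - h x₀| ≤ c * |t - x₀| := by
      simpa [Real.norm_eq_abs] using htc
    calc ‖∫ v in (h x₀)..(h t), (g v t - g v x₀)‖
        ≤ M * |t - x₀| * (c * |t - x₀|) := by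
          refine h1.trans ?_
          have := mul_le_mul_of_nonneg_left h2 (by positivity : (0:ℝ) ≤ M * |t - x₀|)
          linarith
      _ ≤ e * ‖t - x₀‖ := by
          rw [Real.norm_eq_abs]
          have habs : (0:ℝ) ≤ |t - x₀| := abs_nonneg _
          have key : M * c * |t - x₀| ≤ e := by
            have h3 : M * c + 1 > 0 := by positivity
            have := mul_le_mul_of_nonneg_left hte (le_of_lt h3)
            rw [mul_div_cancel₀ _ (ne_of_gt h3)] at this
            nlinarith [abs_nonneg (t - x₀)]
          nlinarith
  -- combine
  have hfinal := hA.sub (hC.add hR)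
  have heq : (fun t => ∫ v in Ioi (h t), g v t) =ᶠ[𝓝 x₀]
      (fun t => (∫ v in Ioi (h x₀), g v t) -
        ((∫ v in (h x₀)..(h t), g v x₀) + ∫ v in (h x₀)..(h t), (g v t - g v x₀))) := by
    filter_upwards [isOpen_Ioo.mem_nhds hx₀] with t ht
    have h1 := split_int (hint t ht) (h t) (h x₀)
    have h2 : ∫ v in (h x₀)..(h t), (g v t - g v x₀)
        = (∫ v in (h x₀)..(h t), g v t) - ∫ v in (h x₀)..(h t), g v x₀ :=
      intervalIntegral.integral_sub ((hint t ht).intervalIntegrable)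
        ((hint x₀ hx₀).intervalIntegrable)
    have h3 : (∫ v in (h t)..(h x₀), g v t) = -∫ v in (h x₀)..(h t), g v t :=
      intervalIntegral.integral_symm _ _
    rw [h1, h2, h3]; ring
  have := hfinal.congr_of_eventuallyEq heq
  simpa using this

/-- Identification theorem (control arm) for the fuzzy regression kink design:
with `ν₂(x) = ∫_{h(x)}^{∞} f(v,x) dv` and `ν₁(x,y) = ∫_{h(x)}^{∞} f(v,x)·F₀(y,v,x) dv`,
the local Wald ratio of the kink differences of the derivatives identifies `F₀(y,h(0),0)`:
`[lim_{x↓0} ∂ν₁/∂x − lim_{x↑0} ∂ν₁/∂x] / [lim_{x↓0} ν₂' − lim_{x↑0} ν₂'] = F₀(y,h(0),0)`.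
Here `f'` is `∂f/∂x` and `P' y` is `∂/∂x [f(v,x)·F₀(y,v,x)]`. -/
theorem statement5
    (δ : ℝ) (hδ : 0 < δ)
    (h h' : ℝ → ℝ)
    (hcont : ContinuousAt h 0)
    (hh : ∀ x ∈ Ioo (-δ) δ \ {0}, HasDerivAt h (h' x) x)
    (hp hm : ℝ)
    (hhp : Tendsto h' (𝓝[>] (0:ℝ)) (𝓝 hp))
    (hhm : Tendsto h' (𝓝[<] (0:ℝ)) (𝓝 hm))
    (hkink : hp ≠ hm)
    (f f' : ℝ → ℝ → ℝ)
    (hf_cont : ContinuousOn (fun p : ℝ × ℝ => f p.1 p.2) ((univ : Set ℝ) ×ˢ Ioo (-δ) δ))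
    (hf_deriv : ∀ v : ℝ, ∀ x ∈ Ioo (-δ) δ, HasDerivAt (fun t => f v t) (f' v x) x)
    (hf'_cont : ContinuousOn (fun p : ℝ × ℝ => f' p.1 p.2) ((univ : Set ℝ) ×ˢ Ioo (-δ) δ))
    (G : ℝ → ℝ) (hG : Integrable G)
    (hdom : ∀ (v : ℝ), ∀ x ∈ Ioo (-δ) δ, |f' v x| ≤ G v)
    (hint : ∀ x ∈ Ioo (-δ) δ, Integrable (fun v => f v x))
    (hfpos : 0 < f (h 0) 0)
    (F₀ : ℝ → ℝ → ℝ → ℝ) (P' : ℝ → ℝ → ℝ → ℝ)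
    (hP_cont : ∀ y : ℝ, ContinuousOn (fun p : ℝ × ℝ => f p.1 p.2 * F₀ y p.1 p.2)
      ((univ : Set ℝ) ×ˢ Ioo (-δ) δ))
    (hP_deriv : ∀ (y v : ℝ), ∀ x ∈ Ioo (-δ) δ,
      HasDerivAt (fun t => f v t * F₀ y v t) (P' y v x) x)
    (hP'_cont : ∀ y : ℝ, ContinuousOn (fun p : ℝ × ℝ => P' y p.1 p.2)
      ((univ : Set ℝ) ×ˢ Ioo (-δ) δ))
    (hPdom : ∀ y : ℝ, ∃ Gy : ℝ → ℝ, Integrable Gy ∧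
      ∀ (v : ℝ), ∀ x ∈ Ioo (-δ) δ, |P' y v x| ≤ Gy v)
    (hPint : ∀ (y : ℝ), ∀ x ∈ Ioo (-δ) δ,
      Integrable (fun v => f v x * F₀ y v x))
    (hIcont2 : ContinuousAt (fun x => ∫ v in Ioi (h x), f' v x) 0)
    (hIcont1 : ∀ y : ℝ, ContinuousAt (fun x => ∫ v in Ioi (h x), P' y v x) 0) :
    ∀ y : ℝ, ∃ Np Nm Dp Dm : ℝ,
      Tendsto (fun x => deriv (fun t => ∫ v in Ioi (h t), f v t * F₀ y v t) x)
        (𝓝[>] (0:ℝ)) (𝓝 Np) ∧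
      Tendsto (fun x => deriv (fun t => ∫ v in Ioi (h t), f v t * F₀ y v t) x)
        (𝓝[<] (0:ℝ)) (𝓝 Nm) ∧
      Tendsto (fun x => deriv (fun t => ∫ v in Ioi (h t), f v t) x)
        (𝓝[>] (0:ℝ)) (𝓝 Dp) ∧
      Tendsto (fun x => deriv (fun t => ∫ v in Ioi (h t), f v t) x)
        (𝓝[<] (0:ℝ)) (𝓝 Dm) ∧
      (Np - Nm) / (Dp - Dm) = F₀ y (h 0) 0 := by
  intro y
  obtain ⟨Gy, hGy, hGydom⟩ := hPdom y
  have h0mem : (0:ℝ) ∈ Ioo (-δ) δ := ⟨by linarith, hδ⟩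
  have hopen : IsOpen ((univ : Set ℝ) ×ˢ Ioo (-δ) δ) := isOpen_univ.prod isOpen_Ioo
  -- derivative formulas on the punctured interval
  have hderiv2 : ∀ x ∈ Ioo (-δ) δ \ {0},
      deriv (fun t => ∫ v in Ioi (h t), f v t) x
        = (∫ v in Ioi (h x), f' v x) - f (h x) x * h' x := fun x hx =>
    (key_deriv δ h f f' G hG hf_cont hf_deriv hf'_cont hdom hint hx.1 (hh x hx)).deriv
  have hderiv1 : ∀ x ∈ Ioo (-δ) δ \ {0},
      deriv (fun t => ∫ v in Ioi (h t), f v t * F₀ y v t) x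
        = (∫ v in Ioi (h x), P' y v x) - f (h x) x * F₀ y (h x) x * h' x := fun x hx =>
    (key_deriv δ h (fun v t => f v t * F₀ y v t) (P' y) Gy hGy (hP_cont y)
      (hP_deriv y) (hP'_cont y) hGydom (hPint y) hx.1 (hh x hx)).deriv
  -- boundary-value continuity
  have hfc0 : ContinuousAt (fun x => f (h x) x) 0 :=
    (hf_cont.continuousAt (hopen.mem_nhds ⟨trivial, h0mem⟩)).comp
      (hcont.prodMk continuousAt_id)
  have hPc0 : ContinuousAt (fun x => f (h x) x * F₀ y (h x) x) 0 :=
    ((hP_cont y).continuousAt (hopen.mem_nhds ⟨trivial, h0mem⟩)).comp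
      (hcont.prodMk continuousAt_id)
  -- eventual membership
  have hEp : ∀ᶠ x in 𝓝[>] (0:ℝ), x ∈ Ioo (-δ) δ \ {0} := by
    filter_upwards [Ioo_mem_nhdsGT_of_mem (⟨le_refl 0, hδ⟩ : (0:ℝ) ∈ Ico (0:ℝ) δ)]
      with x hx
    exact ⟨⟨by linarith [hx.1], hx.2⟩, ne_of_gt hx.1⟩
  have hEm : ∀ᶠ x in 𝓝[<] (0:ℝ), x ∈ Ioo (-δ) δ \ {0} := by
    filter_upwards [Ioo_mem_nhdsLT_of_mem (⟨neg_lt_zero.2 hδ, le_refl 0⟩ :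
      (0:ℝ) ∈ Ioc (-δ) (0:ℝ))] with x hx
    exact ⟨⟨hx.1, by linarith [hx.2]⟩, ne_of_lt hx.2⟩
  refine ⟨(∫ v in Ioi (h 0), P' y v 0) - f (h 0) 0 * F₀ y (h 0) 0 * hp,
    (∫ v in Ioi (h 0), P' y v 0) - f (h 0) 0 * F₀ y (h 0) 0 * hm,
    (∫ v in Ioi (h 0), f' v 0) - f (h 0) 0 * hp,
    (∫ v in Ioi (h 0), f' v 0) - f (h 0) 0 * hm, ?_, ?_, ?_, ?_, ?_⟩
  · refine Tendsto.congr' (hEp.mono fun x hx => (hderiv1 x hx).symm) ?_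
    exact (((hIcont1 y).tendsto.mono_left nhdsWithin_le_nhds).sub
      ((hPc0.tendsto.mono_left nhdsWithin_le_nhds).mul hhp))
  · refine Tendsto.congr' (hEm.mono fun x hx => (hderiv1 x hx).symm) ?_
    exact (((hIcont1 y).tendsto.mono_left nhdsWithin_le_nhds).sub
      ((hPc0.tendsto.mono_left nhdsWithin_le_nhds).mul hhm))
  · refine Tendsto.congr' (hEp.mono fun x hx => (hderiv2 x hx).symm) ?_
    exact ((hIcont2.tendsto.mono_left nhdsWithin_le_nhds).sub
      ((hfc0.tendsto.mono_left nhdsWithin_le_nhds).mul hhp))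
  · refine Tendsto.congr' (hEm.mono fun x hx => (hderiv2 x hx).symm) ?_
    exact ((hIcont2.tendsto.mono_left nhdsWithin_le_nhds).sub
      ((hfc0.tendsto.mono_left nhdsWithin_le_nhds).mul hhm))
  · have hne : f (h 0) 0 * (hm - hp) ≠ 0 :=
      mul_ne_zero (ne_of_gt hfpos) (sub_ne_zero.2 (Ne.symm hkink))
    have e1 : ((∫ v in Ioi (h 0), P' y v 0) - f (h 0) 0 * F₀ y (h 0) 0 * hp)
        - ((∫ v in Ioi (h 0), P' y v 0) - f (h 0) 0 * F₀ y (h 0) 0 * hm)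
        = f (h 0) 0 * F₀ y (h 0) 0 * (hm - hp) := by ring
    have e2 : ((∫ v in Ioi (h 0), f' v 0) - f (h 0) 0 * hp)
        - ((∫ v in Ioi (h 0), f' v 0) - f (h 0) 0 * hm)
        = f (h 0) 0 * (hm - hp) := by ring
    rw [e1, e2, div_eq_iff hne]; ring
end

section
/- Let K : ℝ → ℝ be a nonnegative bounded measurable function vanishing outside [−1,1] with ∫_{−1}^{1} K(w) dw = 1, let t ∈ ℕ, let x̄ > 0, L ≥ 0, and let f : ℝ × (0, ∞) → ℝ and f₀ : ℝ → ℝ satisfy |f(y′, x) − f₀(y)| ≤ L·(|y′ − y| + x) for all y, y′ ∈ ℝ and x ∈ (0, x̄]. Assume f is integrable over ℝ × (0, x̄]. Then for every y ∈ ℝ, every a with 0 < a ≤ x̄, and every b > 0 with b ≤ 1, | (1/(a b)) ∫_{0}^{∞} ∫_{ℝ} K(x/a) (x/a)^t K((y′ − y)/b) f(y′, x) dy′ dx − f₀(y) · ∫_{0}^{1} u^t K(u) du | ≤ L·(a + b)·∫_{0}^{1} u^t K(u) du. -/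
open MeasureTheory Set Filter Topology intervalIntegral

section Aux

variable {K : ℝ → ℝ}

private lemma aux_K_integrable (hK_meas : Measurable K)
    (hK_nonneg : ∀ u : ℝ, 0 ≤ K u) {C : ℝ} (hC : ∀ u, K u ≤ C)
    (hK_supp : ∀ u : ℝ, u ∉ Icc (-1 : ℝ) 1 → K u = 0) :
    Integrable K (volume : Measure ℝ) := by
  have hKind : (Icc (-1:ℝ) 1).indicator K = K := by
    funext u
    by_cases h : u ∈ Icc (-1:ℝ) 1
    · simp [indicator_of_mem h]
    · simp [indicator_of_notMem h, hK_supp u h]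
  rw [← hKind]
  rw [integrable_indicator_iff measurableSet_Icc]
  haveI : IsFiniteMeasure (volume.restrict (Icc (-1:ℝ) 1)) :=
    ⟨by rw [Measure.restrict_apply_univ]; exact measure_Icc_lt_top⟩
  refine ⟨hK_meas.aestronglyMeasurable.restrict, HasFiniteIntegral.of_bounded (C := C) ?_⟩
  filter_upwards with u
  rw [Real.norm_eq_abs, abs_of_nonneg (hK_nonneg u)]
  exact hC u

private lemma aux_K_total (hK_supp : ∀ u : ℝ, u ∉ Icc (-1 : ℝ) 1 → K u = 0)
    (hK_int : (∫ w in (-1 : ℝ)..1, K w) = 1) :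
    (∫ u, K u) = 1 := by
  have hKind : (Icc (-1:ℝ) 1).indicator K = K := by
    funext u
    by_cases h : u ∈ Icc (-1:ℝ) 1
    · simp [indicator_of_mem h]
    · simp [indicator_of_notMem h, hK_supp u h]
  rw [← hKind, MeasureTheory.integral_indicator measurableSet_Icc,
    integral_Icc_eq_integral_Ioc,
    ← intervalIntegral.integral_of_le (by norm_num : (-1:ℝ) ≤ 1), hK_int]

private lemma aux_Kb_sum (hK_supp : ∀ u : ℝ, u ∉ Icc (-1 : ℝ) 1 → K u = 0)
    (hK_int : (∫ w in (-1 : ℝ)..1, K w) = 1) (y b : ℝ) (hb : 0 < b) :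
    (∫ y' : ℝ, K ((y' - y) / b)) = b := by
  have h1 : (∫ y' : ℝ, K ((y' - y) / b)) = ∫ z : ℝ, K (z / b) :=
    integral_sub_right_eq_self (fun z => K (z / b)) y
  rw [h1, Measure.integral_comp_div K b, aux_K_total hK_supp hK_int, abs_of_pos hb,
    smul_eq_mul, mul_one]

private lemma aux_c_sum (hK_supp : ∀ u : ℝ, u ∉ Icc (-1 : ℝ) 1 → K u = 0)
    (t : ℕ) {a : ℝ} (ha : 0 < a) :
    (∫ x in Ioi (0:ℝ), K (x / a) * (x / a) ^ t) = a * ∫ u in (0:ℝ)..1, u ^ t * K u := by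
  have h1 : (∫ x in Ioi (0:ℝ), K (x / a) * (x / a) ^ t)
      = ∫ x in Ioi (0:ℝ), (fun u => K u * u ^ t) (x * a⁻¹) := by
    simp_rw [div_eq_mul_inv]
  rw [h1, integral_comp_mul_right_Ioi (fun u => K u * u ^ t) 0 (inv_pos.2 ha)]
  have h2 : (∫ x in Ioi ((0:ℝ) * a⁻¹), K x * x ^ t) = ∫ u in (0:ℝ)..1, u ^ t * K u := by
    rw [zero_mul]
    have e1 : ∀ x ∈ Ioi (0:ℝ), K x * x ^ t = (Ioc (0:ℝ) 1).indicator (fun x => K x * x ^ t) x := by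
      intro x hx
      by_cases h : x ∈ Ioc (0:ℝ) 1
      · rw [indicator_of_mem h]
      · rw [indicator_of_notMem h, hK_supp x, zero_mul]
        simp only [mem_Ioi] at hx
        simp only [mem_Ioc, not_and, not_le] at h
        simp only [mem_Icc, not_and, not_le]
        intro _
        exact h hx
    rw [setIntegral_congr_fun measurableSet_Ioi e1,
      MeasureTheory.setIntegral_indicator measurableSet_Ioc]
    have : Ioi (0:ℝ) ∩ Ioc (0:ℝ) 1 = Ioc (0:ℝ) 1 := inter_eq_right.2 Ioc_subset_Ioi_self
    rw [this, intervalIntegral.integral_of_le (by norm_num : (0:ℝ) ≤ 1)]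
    exact setIntegral_congr_fun measurableSet_Ioc (fun x _ => mul_comm _ _)
  rw [inv_inv, smul_eq_mul, h2]

private lemma aux_c_int (hK_meas : Measurable K)
    (hK_nonneg : ∀ u : ℝ, 0 ≤ K u) {C : ℝ} (hC : ∀ u, K u ≤ C)
    (hK_supp : ∀ u : ℝ, u ∉ Icc (-1 : ℝ) 1 → K u = 0)
    (t : ℕ) {a : ℝ} (ha : 0 < a) :
    IntegrableOn (fun x => K (x / a) * (x / a) ^ t) (Ioi (0:ℝ)) := by
  have hc_meas : Measurable (fun x : ℝ => K (x / a) * (x / a) ^ t) :=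
    ((hK_meas.comp (measurable_id.div_const a)).mul
      ((measurable_id.div_const a).pow_const t))
  have hIoc : IntegrableOn (fun x : ℝ => K (x / a) * (x / a) ^ t) (Ioc (0:ℝ) a) := by
    haveI : IsFiniteMeasure (volume.restrict (Ioc (0:ℝ) a)) :=
      ⟨by rw [Measure.restrict_apply_univ]; exact measure_Ioc_lt_top⟩
    refine ⟨hc_meas.aestronglyMeasurable.restrict, HasFiniteIntegral.of_bounded (C := C) ?_⟩
    filter_upwards [ae_restrict_mem measurableSet_Ioc] with x hx
    have hxa : 0 < x / a := div_pos hx.1 ha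
    have hxa1 : x / a ≤ 1 := (div_le_one ha).2 hx.2
    have h1 : (x / a) ^ t ≤ 1 := pow_le_one₀ hxa.le hxa1
    have h2 : 0 ≤ C := le_trans (hK_nonneg 0) (hC 0)
    rw [Real.norm_eq_abs, abs_of_nonneg (mul_nonneg (hK_nonneg _) (pow_nonneg hxa.le t))]
    calc K (x / a) * (x / a) ^ t ≤ C * 1 := mul_le_mul (hC _) h1 (pow_nonneg hxa.le t) h2
      _ = C := mul_one C
  have heq : ∀ x ∈ Ioi (0:ℝ), K (x / a) * (x / a) ^ t
      = (Ioc (0:ℝ) a).indicator (fun x => K (x / a) * (x / a) ^ t) x := by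
    intro x hx
    by_cases h : x ∈ Ioc (0:ℝ) a
    · rw [indicator_of_mem h]
    · rw [indicator_of_notMem h]
      simp only [mem_Ioi] at hx
      simp only [mem_Ioc, not_and, not_le] at h
      have : K (x / a) = 0 := by
        apply hK_supp
        simp only [mem_Icc, not_and, not_le]
        intro _
        exact (one_lt_div ha).2 (h hx)
      simp [this]
  refine IntegrableOn.congr_fun ?_ (fun x hx => (heq x hx).symm) measurableSet_Ioi
  rw [IntegrableOn, integrable_indicator_iff measurableSet_Ioc, IntegrableOn,
    Measure.restrict_restrict measurableSet_Ioc,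
    (inter_eq_left.2 Ioc_subset_Ioi_self : Ioc (0:ℝ) a ∩ Ioi 0 = Ioc 0 a)]
  exact hIoc

end Aux

/-- Bivariate kernel expectation approximation (Step 4 of the uniform consistency proof):
`| (1/(ab)) ∫_{0}^{∞} ∫_ℝ K(x/a) (x/a)^t K((y'−y)/b) f(y',x) dy' dx
    − f₀(y) ∫_{0}^{1} u^t K(u) du |
  ≤ L (a + b) ∫_{0}^{1} u^t K(u) du`. -/
theorem statement10
    (K : ℝ → ℝ) (hK_meas : Measurable K)
    (hK_nonneg : ∀ u : ℝ, 0 ≤ K u)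
    (hK_bdd : ∃ C : ℝ, ∀ u, K u ≤ C)
    (hK_supp : ∀ u : ℝ, u ∉ Icc (-1 : ℝ) 1 → K u = 0)
    (hK_int : (∫ w in (-1 : ℝ)..1, K w) = 1)
    (t : ℕ) (xbar : ℝ) (hxbar : 0 < xbar) (L : ℝ) (hL : 0 ≤ L)
    (f : ℝ → ℝ → ℝ) (f₀ : ℝ → ℝ)
    (hf_lip : ∀ (y y' : ℝ), ∀ x ∈ Ioc (0 : ℝ) xbar, |f y' x - f₀ y| ≤ L * (|y' - y| + x))
    (hf_int : IntegrableOn (fun p : ℝ × ℝ => f p.1 p.2)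
      ((univ : Set ℝ) ×ˢ Ioc (0 : ℝ) xbar)) :
    ∀ (y a b : ℝ), 0 < a → a ≤ xbar → 0 < b → b ≤ 1 →
      |(1 / (a * b)) *
          (∫ x in Ioi (0 : ℝ), ∫ y' : ℝ, K (x / a) * (x / a) ^ t * K ((y' - y) / b) * f y' x)
          - f₀ y * ∫ u in (0 : ℝ)..1, u ^ t * K u|
        ≤ L * (a + b) * ∫ u in (0 : ℝ)..1, u ^ t * K u := by
  intro y a b ha hax hb hb1
  obtain ⟨C, hC⟩ := hK_bdd
  have hC0 : 0 ≤ C := le_trans (hK_nonneg 0) (hC 0)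
  have hKint : Integrable K (volume : Measure ℝ) :=
    aux_K_integrable hK_meas hK_nonneg hC hK_supp
  have hKb_int : Integrable (fun y' : ℝ => K ((y' - y) / b)) :=
    Integrable.comp_sub_right (hKint.comp_div hb.ne') y
  have hKb_sum : (∫ y' : ℝ, K ((y' - y) / b)) = b := aux_Kb_sum hK_supp hK_int y b hb
  set I : ℝ := ∫ u in (0:ℝ)..1, u ^ t * K u with hI
  have hc_sum : (∫ x in Ioi (0:ℝ), K (x / a) * (x / a) ^ t) = a * I :=
    aux_c_sum hK_supp t ha
  have hc_int : IntegrableOn (fun x => K (x / a) * (x / a) ^ t) (Ioi (0:ℝ)) :=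
    aux_c_int hK_meas hK_nonneg hC hK_supp t ha
  -- swap integrability
  have hswap : Integrable (fun p : ℝ × ℝ => f p.2 p.1)
      ((volume.restrict (Ioc (0:ℝ) xbar)).prod (volume : Measure ℝ)) := by
    have h0 : (volume : Measure (ℝ × ℝ)) = (volume : Measure ℝ).prod volume := rfl
    have h1 : Integrable (fun p : ℝ × ℝ => f p.1 p.2)
        (((volume : Measure ℝ).prod volume).restrict ((univ : Set ℝ) ×ˢ Ioc (0:ℝ) xbar)) := by
      rw [IntegrableOn, h0] at hf_int; exact hf_int
    rw [← Measure.prod_restrict, Measure.restrict_univ] at h1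
    exact h1.swap
  -- product integrability over Ioi 0 × ℝ
  have hmeq : ((volume.restrict (Ioc (0:ℝ) xbar)).prod (volume : Measure ℝ)).restrict
      (Ioc (0:ℝ) a ×ˢ (univ : Set ℝ))
      = (volume.restrict (Ioc (0:ℝ) a)).prod (volume : Measure ℝ) := by
    rw [← Measure.prod_restrict, Measure.restrict_univ, Measure.restrict_restrict measurableSet_Ioc,
      inter_eq_left.2 (Ioc_subset_Ioc_right hax)]
  have hswapa : Integrable (fun p : ℝ × ℝ => f p.2 p.1)
      ((volume.restrict (Ioc (0:ℝ) a)).prod (volume : Measure ℝ)) := by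
    rw [← hmeq]; exact hswap.restrict
  have hmeq2 : (volume.restrict (Ioc (0:ℝ) a)).prod (volume : Measure ℝ)
      = ((volume : Measure ℝ).prod volume).restrict (Ioc (0:ℝ) a ×ˢ (univ : Set ℝ)) := by
    rw [← Measure.prod_restrict, Measure.restrict_univ]
  have hg_meas : Measurable (fun p : ℝ × ℝ => K (p.1 / a) * (p.1 / a) ^ t * K ((p.2 - y) / b)) :=
    ((hK_meas.comp ((measurable_fst).div_const a)).mul
      (((measurable_fst).div_const a).pow_const t)).mul
      (hK_meas.comp (((measurable_snd).sub_const y).div_const b))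
  have hPa : Integrable
      (fun p : ℝ × ℝ => K (p.1 / a) * (p.1 / a) ^ t * K ((p.2 - y) / b) * f p.2 p.1)
      ((volume.restrict (Ioc (0:ℝ) a)).prod (volume : Measure ℝ)) := by
    refine Integrable.mono' ((hswapa.norm).const_mul (C * C))
      (hg_meas.aestronglyMeasurable.mul hswapa.aestronglyMeasurable) ?_
    rw [hmeq2]
    filter_upwards [ae_restrict_mem (measurableSet_Ioc.prod MeasurableSet.univ)] with p hp
    obtain ⟨hp1, -⟩ := hp
    have hxa : 0 < p.1 / a := div_pos hp1.1 ha
    have hxa1 : (p.1 / a) ^ t ≤ 1 := pow_le_one₀ hxa.le ((div_le_one ha).2 hp1.2)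
    have hgb : K (p.1 / a) * (p.1 / a) ^ t * K ((p.2 - y) / b) ≤ C * C := by
      calc K (p.1 / a) * (p.1 / a) ^ t * K ((p.2 - y) / b)
          ≤ (C * 1) * C := by
            refine mul_le_mul (mul_le_mul (hC _) hxa1 (pow_nonneg hxa.le t) hC0)
              (hC _) (hK_nonneg _) (by positivity)
        _ = C * C := by ring
    have hgnn : 0 ≤ K (p.1 / a) * (p.1 / a) ^ t * K ((p.2 - y) / b) :=
      mul_nonneg (mul_nonneg (hK_nonneg _) (pow_nonneg hxa.le t)) (hK_nonneg _)
    rw [Real.norm_eq_abs, abs_mul, abs_of_nonneg hgnn]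
    exact mul_le_mul_of_nonneg_right hgb (abs_nonneg _)
  have hP : Integrable
      (fun p : ℝ × ℝ => K (p.1 / a) * (p.1 / a) ^ t * K ((p.2 - y) / b) * f p.2 p.1)
      ((volume.restrict (Ioi (0:ℝ))).prod (volume : Measure ℝ)) := by
    have hind : Integrable
        ((Ioc (0:ℝ) a ×ˢ (univ : Set ℝ)).indicator
          (fun p : ℝ × ℝ => K (p.1 / a) * (p.1 / a) ^ t * K ((p.2 - y) / b) * f p.2 p.1))
        ((volume.restrict (Ioi (0:ℝ))).prod (volume : Measure ℝ)) := by
      rw [integrable_indicator_iff (measurableSet_Ioc.prod MeasurableSet.univ)]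
      rw [IntegrableOn, ← Measure.prod_restrict, Measure.restrict_univ,
        Measure.restrict_restrict measurableSet_Ioc,
        (inter_eq_left.2 Ioc_subset_Ioi_self : Ioc (0:ℝ) a ∩ Ioi 0 = Ioc 0 a)]
      exact hPa
    refine hind.congr ?_
    have hmeq3 : (volume.restrict (Ioi (0:ℝ))).prod (volume : Measure ℝ)
        = ((volume : Measure ℝ).prod volume).restrict (Ioi (0:ℝ) ×ˢ (univ : Set ℝ)) := by
      rw [← Measure.prod_restrict, Measure.restrict_univ]
    rw [hmeq3]
    filter_upwards [ae_restrict_mem (measurableSet_Ioi.prod MeasurableSet.univ)] with p hp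
    obtain ⟨hp1, -⟩ := hp
    by_cases h : p.1 ≤ a
    · rw [indicator_of_mem (by exact ⟨⟨hp1, h⟩, mem_univ _⟩)]
    · rw [indicator_of_notMem (by simp [h])]
      have : K (p.1 / a) = 0 := by
        apply hK_supp
        simp only [mem_Icc, not_and, not_le]
        intro _
        exact (one_lt_div ha).2 (lt_of_not_ge h)
      simp [this]
  -- iterated-integral integrability
  have h_inner_int : Integrable
      (fun x => ∫ y' : ℝ, K (x / a) * (x / a) ^ t * K ((y' - y) / b) * f y' x)
      (volume.restrict (Ioi (0:ℝ))) := hP.integral_prod_left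
  have hM_int : Integrable (fun x => K (x / a) * (x / a) ^ t * (b * f₀ y))
      (volume.restrict (Ioi (0:ℝ))) := hc_int.mul_const _
  have hB_int : Integrable (fun x => K (x / a) * (x / a) ^ t * (b * (L * (a + b))))
      (volume.restrict (Ioi (0:ℝ))) := hc_int.mul_const _
  -- slice integrability
  have hslice : ∀ᵐ x ∂(volume : Measure ℝ), x ∈ Ioc (0:ℝ) xbar →
      Integrable (fun y' => f y' x) (volume : Measure ℝ) :=
    (ae_restrict_iff' measurableSet_Ioc).1 hswap.prod_right_ae
  -- pointwise (in x) bound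
  have hbd : ∀ᵐ x ∂(volume.restrict (Ioi (0:ℝ))),
      ‖(∫ y' : ℝ, K (x / a) * (x / a) ^ t * K ((y' - y) / b) * f y' x)
          - K (x / a) * (x / a) ^ t * (b * f₀ y)‖
        ≤ K (x / a) * (x / a) ^ t * (b * (L * (a + b))) := by
    rw [ae_restrict_iff' measurableSet_Ioi]
    filter_upwards [hslice] with x hx hxpos
    rw [mem_Ioi] at hxpos
    by_cases hxa : x ≤ a
    · have hmem : x ∈ Ioc (0:ℝ) xbar := ⟨hxpos, le_trans hxa hax⟩
      have hint : Integrable (fun y' => f y' x) (volume : Measure ℝ) := hx hmem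
      have hcnn : 0 ≤ K (x / a) * (x / a) ^ t :=
        mul_nonneg (hK_nonneg _) (pow_nonneg (div_pos hxpos ha).le t)
      have h₁ : Integrable
          (fun y' : ℝ => K (x / a) * (x / a) ^ t * K ((y' - y) / b) * f y' x)
          (volume : Measure ℝ) := by
        refine Integrable.mono' ((hint.norm.const_mul ((K (x / a) * (x / a) ^ t) * C)))
          (((hK_meas.comp ((measurable_id.sub_const y).div_const b)).const_mul
            (K (x / a) * (x / a) ^ t)).aestronglyMeasurable.mul
            hint.aestronglyMeasurable) ?_
        filter_upwards with y'
        rw [Real.norm_eq_abs, abs_mul,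
          abs_of_nonneg (mul_nonneg hcnn (hK_nonneg _))]
        refine mul_le_mul_of_nonneg_right ?_ (abs_nonneg _)
        exact mul_le_mul_of_nonneg_left (hC _) hcnn
      have h₂ : Integrable
          (fun y' : ℝ => K (x / a) * (x / a) ^ t * K ((y' - y) / b) * f₀ y)
          (volume : Measure ℝ) :=
        (hKb_int.const_mul (K (x / a) * (x / a) ^ t)).mul_const (f₀ y)
      have eq₂ : (∫ y' : ℝ, K (x / a) * (x / a) ^ t * K ((y' - y) / b) * f₀ y)
          = K (x / a) * (x / a) ^ t * (b * f₀ y) := by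
        rw [MeasureTheory.integral_mul_const, MeasureTheory.integral_const_mul, hKb_sum]; ring
      have heq : (∫ y' : ℝ, K (x / a) * (x / a) ^ t * K ((y' - y) / b) * f y' x)
            - K (x / a) * (x / a) ^ t * (b * f₀ y)
          = ∫ y' : ℝ, (K (x / a) * (x / a) ^ t * K ((y' - y) / b)) * (f y' x - f₀ y) := by
        rw [← eq₂, ← integral_sub h₁ h₂]
        congr 1
        funext y'
        ring
      rw [heq]
      have hBint : Integrable
          (fun y' : ℝ => K (x / a) * (x / a) ^ t * K ((y' - y) / b) * (L * (a + b)))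
          (volume : Measure ℝ) :=
        (hKb_int.const_mul (K (x / a) * (x / a) ^ t)).mul_const (L * (a + b))
      have hle := MeasureTheory.norm_integral_le_of_norm_le
        (f := fun y' : ℝ =>
          (K (x / a) * (x / a) ^ t * K ((y' - y) / b)) * (f y' x - f₀ y)) hBint ?_
      · refine le_trans hle (le_of_eq ?_)
        rw [MeasureTheory.integral_mul_const, MeasureTheory.integral_const_mul, hKb_sum]; ring
      · filter_upwards with y'
        rw [Real.norm_eq_abs, abs_mul]
        by_cases hk : K ((y' - y) / b) = 0
        · simp [hk]
        · have hy : |y' - y| ≤ b := by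
            have hmem2 : (y' - y) / b ∈ Icc (-1:ℝ) 1 :=
              by_contra fun h => hk (hK_supp _ h)
            have habs : |(y' - y) / b| ≤ 1 := abs_le.2 ⟨hmem2.1, hmem2.2⟩
            rwa [abs_div, abs_of_pos hb, div_le_one hb] at habs
          have hlip := hf_lip y y' x hmem
          have hdiff : |f y' x - f₀ y| ≤ L * (a + b) := by
            refine le_trans hlip ?_
            have : |y' - y| + x ≤ a + b := by
              have := hmem.2
              linarith [hy, hxa]
            nlinarith
          have habsK : |K (x / a) * (x / a) ^ t * K ((y' - y) / b)|
              = K (x / a) * (x / a) ^ t * K ((y' - y) / b) :=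
            abs_of_nonneg (mul_nonneg hcnn (hK_nonneg _))
          rw [habsK]
          exact mul_le_mul_of_nonneg_left hdiff (mul_nonneg hcnn (hK_nonneg _))
    · -- x > a : everything vanishes
      have hk0 : K (x / a) = 0 := by
        apply hK_supp
        simp only [mem_Icc, not_and, not_le]
        intro _
        exact (one_lt_div ha).2 (lt_of_not_ge hxa)
      have hzero : (∫ y' : ℝ, K (x / a) * (x / a) ^ t * K ((y' - y) / b) * f y' x) = 0 := by
        have : (fun y' : ℝ => K (x / a) * (x / a) ^ t * K ((y' - y) / b) * f y' x)
            = fun _ => 0 := by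
          funext y'; rw [hk0]; ring
        rw [this, MeasureTheory.integral_zero]
      rw [hzero, hk0]
      simp
  -- assemble
  have hvalM : (∫ x in Ioi (0:ℝ), K (x / a) * (x / a) ^ t * (b * f₀ y))
      = a * I * (b * f₀ y) := by
    rw [MeasureTheory.integral_mul_const, hc_sum]
  have hvalB : (∫ x in Ioi (0:ℝ), K (x / a) * (x / a) ^ t * (b * (L * (a + b))))
      = a * I * (b * (L * (a + b))) := by
    rw [MeasureTheory.integral_mul_const, hc_sum]
  have key : ‖(∫ x in Ioi (0:ℝ), ∫ y' : ℝ, K (x / a) * (x / a) ^ t * K ((y' - y) / b) * f y' x)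
      - a * I * (b * f₀ y)‖ ≤ a * I * (b * (L * (a + b))) := by
    rw [← hvalM, ← integral_sub h_inner_int hM_int, ← hvalB]
    exact MeasureTheory.norm_integral_le_of_norm_le hB_int hbd
  rw [Real.norm_eq_abs] at key
  have hab : (0:ℝ) < a * b := mul_pos ha hb
  have hrw : (1 / (a * b)) *
        (∫ x in Ioi (0 : ℝ), ∫ y' : ℝ, K (x / a) * (x / a) ^ t * K ((y' - y) / b) * f y' x)
        - f₀ y * I
      = (1 / (a * b)) *
        ((∫ x in Ioi (0 : ℝ), ∫ y' : ℝ, K (x / a) * (x / a) ^ t * K ((y' - y) / b) * f y' x)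
          - a * I * (b * f₀ y)) := by
    field_simp
  rw [hrw, abs_mul, abs_of_pos (by positivity : (0:ℝ) < 1 / (a * b))]
  calc (1 / (a * b)) *
        |(∫ x in Ioi (0 : ℝ), ∫ y' : ℝ, K (x / a) * (x / a) ^ t * K ((y' - y) / b) * f y' x)
          - a * I * (b * f₀ y)|
      ≤ (1 / (a * b)) * (a * I * (b * (L * (a + b)))) := by
        exact mul_le_mul_of_nonneg_left key (by positivity)
    _ = L * (a + b) * I := by
        field_simp
end
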